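/- For any two boundary vertices b1, b2 ∈ B, the distance in the boundary graph is at most the distance in G: dist_BG(b1,b2) ≤ dist_G(b1,b2). Concretely, for every walk p in G from b1 to b2 there exists a walk in BG from b1 to b2 whose length (with weights wt) is at most the length of p. -/

import Mathlib

/-!
Follow a `G`-walk backwards from its endpoint. Maximal stretches inside one component `C_i`
cost at least the `C_i`-distance between their endpoints, which is exactly the weight of the
corresponding `BG`-edge; every edge between two components joins two boundary vertices and is
itself a `BG`-edge of the same weight. Hence the walk can be replaced by a `BG`-walk that is
no longer.
-/

open scoped ENNReal

namespace SPQ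

variable {V : Type*} {ι : Type*}

/-- The length of a walk: the sum of the weights `w` over its consecutive edges. -/
noncomputable def wlen (w : V → V → ℝ≥0∞) {G : SimpleGraph V} {u v : V} (p : G.Walk u v) : ℝ≥0∞ :=
  (p.darts.map fun d => w d.toProd.1 d.toProd.2).sum

/-- The shortest-path distance: infimum of lengths of all walks (⊤ if none exists). -/
noncomputable def gdist (G : SimpleGraph V) (w : V → V → ℝ≥0∞) (u v : V) : ℝ≥0∞ :=
  ⨅ p : G.Walk u v, wlen w p

/-- The component `C_i`: the subgraph of `G` induced on `P ⁻¹ {i}`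
(as a graph on `V`: edges of `G` with both endpoints mapped to `i` by `P`). -/
def comp (G : SimpleGraph V) (P : V → ι) (i : ι) : SimpleGraph V where
  Adj u v := G.Adj u v ∧ P u = i ∧ P v = i
  symm := ⟨fun _ _ h => ⟨h.1.symm, h.2.2, h.2.1⟩⟩
  loopless := ⟨fun _ h => G.irrefl h.1⟩

/-- The boundary `B(C_i)`: vertices of component `i` having a `G`-neighbor
in a different component. -/
def bdry (G : SimpleGraph V) (P : V → ι) (i : ι) : Set V :=
  {v | P v = i ∧ ∃ u, G.Adj v u ∧ P u ≠ i}

/-- The set `B` of all boundary vertices. -/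
def bdryAll (G : SimpleGraph V) (P : V → ι) : Set V :=
  ⋃ i, bdry G P i

/-- The boundary graph `BG`: distinct boundary vertices `b1, b2` are adjacent
iff `P b1 = P b2` or `G.Adj b1 b2`. -/
def BGraph (G : SimpleGraph V) (P : V → ι) : SimpleGraph V where
  Adj b1 b2 := b1 ≠ b2 ∧ b1 ∈ bdryAll G P ∧ b2 ∈ bdryAll G P ∧ (P b1 = P b2 ∨ G.Adj b1 b2)
  symm := by
    constructor
    intro u v h
    refine ⟨h.1.symm, h.2.2.1, h.2.1, ?_⟩
    rcases h.2.2.2 with h' | h'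
    · exact Or.inl h'.symm
    · exact Or.inr h'.symm
  loopless := ⟨fun u h => h.1 rfl⟩

open Classical in
/-- The edge weight of the boundary graph:
`wt b1 b2 = dist_{C_{P b1}}(b1, b2)` if `P b1 = P b2`, and `w b1 b2` otherwise. -/
noncomputable def wt (G : SimpleGraph V) (P : V → ι) (w : V → V → ℝ≥0∞) (b1 b2 : V) : ℝ≥0∞ :=
  if P b1 = P b2 then gdist (comp G P (P b1)) w b1 b2 else w b1 b2

open SimpleGraph

section Length

variable {G : SimpleGraph V} (w : V → V → ℝ≥0∞)

@[simp]
lemma wlen_nil {u : V} : wlen w (Walk.nil : G.Walk u u) = 0 := by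
  simp [wlen]

@[simp]
lemma wlen_cons {u v x : V} (h : G.Adj u v) (p : G.Walk v x) :
    wlen w (Walk.cons h p) = w u v + wlen w p := by
  simp [wlen]

lemma gdist_le_wlen {u v : V} (p : G.Walk u v) : gdist G w u v ≤ wlen w p :=
  iInf_le _ p

@[simp]
lemma gdist_self (u : V) : gdist G w u u = 0 :=
  nonpos_iff_eq_zero.1 ((gdist_le_wlen w Walk.nil).trans_eq (wlen_nil w))

lemma gdist_le_add_of_adj {u v x : V} (h : G.Adj u v) :
    gdist G w u x ≤ w u v + gdist G w v x := by
  rw [gdist, gdist, ENNReal.add_iInf]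
  exact le_iInf fun p => (gdist_le_wlen w (Walk.cons h p)).trans_eq (wlen_cons w h p)

lemma gdist_le_gdist_of_forall_walk {H : SimpleGraph V} {w' : V → V → ℝ≥0∞} {u v : V}
    (h : ∀ p : G.Walk u v, ∃ q : H.Walk u v, wlen w' q ≤ wlen w p) :
    gdist H w' u v ≤ gdist G w u v :=
  le_iInf fun p => (h p).elim fun q hq => (gdist_le_wlen w' q).trans hq

end Length

section BoundaryGraph

variable {G : SimpleGraph V} {P : V → ι} {w : V → V → ℝ≥0∞}

lemma mem_bdryAll_of_adj {u v : V} (h : G.Adj u v) (hne : P u ≠ P v) : u ∈ bdryAll G P :=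
  Set.mem_iUnion.2 ⟨P u, rfl, v, h, fun e => hne e.symm⟩

lemma bGraph_adj_of_adj {u v : V} (h : G.Adj u v) (hne : P u ≠ P v) : (BGraph G P).Adj u v :=
  ⟨h.ne, mem_bdryAll_of_adj h hne, mem_bdryAll_of_adj h.symm (Ne.symm hne), Or.inr h⟩

lemma bGraph_adj_of_eq {u v : V} (hne : u ≠ v) (hu : u ∈ bdryAll G P) (hv : v ∈ bdryAll G P)
    (h : P u = P v) : (BGraph G P).Adj u v :=
  ⟨hne, hu, hv, Or.inl h⟩

lemma wt_of_eq {u v : V} (h : P u = P v) : wt G P w u v = gdist (comp G P (P u)) w u v :=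
  if_pos h

lemma wt_of_ne {u v : V} (h : P u ≠ P v) : wt G P w u v = w u v :=
  if_neg h

lemma exists_bGraph_walk_le_gdist_add {b b' x : V} (hb : b ∈ bdryAll G P) (hb' : b' ∈ bdryAll G P)
    (hP : P b = P b') (q : (BGraph G P).Walk b' x) :
    ∃ q' : (BGraph G P).Walk b x, wlen (wt G P w) q' ≤ gdist (comp G P (P b)) w b b' +
      wlen (wt G P w) q := by
  by_cases hbb' : b = b'
  · subst hbb'
    exact ⟨q, by simp⟩
  · refine ⟨Walk.cons (bGraph_adj_of_eq hbb' hb hb' hP) q, ?_⟩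
    rw [wlen_cons, wt_of_eq hP]

lemma exists_bGraph_walk_of_walk {u x : V} (p : G.Walk u x) (hx : x ∈ bdryAll G P) :
    ∃ b ∈ bdryAll G P, P b = P u ∧ ∃ q : (BGraph G P).Walk b x,
      gdist (comp G P (P u)) w u b + wlen (wt G P w) q ≤ wlen w p := by
  induction p with
  | nil => exact ⟨_, hx, rfl, Walk.nil, by simp⟩
  | @cons u v _ h p ih =>
    obtain ⟨b, hb, hPb, q, hq⟩ := ih hx
    rw [wlen_cons]
    by_cases hP : P u = P v
    · refine ⟨b, hb, hPb.trans hP.symm, q, ?_⟩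
      calc gdist (comp G P (P u)) w u b + wlen (wt G P w) q
          ≤ w u v + gdist (comp G P (P u)) w v b + wlen (wt G P w) q := by
            gcongr
            exact gdist_le_add_of_adj w ⟨h, rfl, hP.symm⟩
        _ ≤ w u v + wlen w p := by
            rw [add_assoc, hP]
            gcongr
    · obtain ⟨q', hq'⟩ :=
        exists_bGraph_walk_le_gdist_add (w := w) (mem_bdryAll_of_adj h.symm (Ne.symm hP)) hb hPb.symm q
      refine ⟨u, mem_bdryAll_of_adj h hP, rfl, Walk.cons (bGraph_adj_of_adj h hP) q', ?_⟩
      rw [gdist_self, zero_add, wlen_cons, wt_of_ne hP]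
      gcongr
      exact hq'.trans hq

end BoundaryGraph

theorem stmt2_general {V : Type*} {ι : Type*}
    (G : SimpleGraph V) (w : V → V → ℝ≥0∞)
    (P : V → ι) (b1 b2 : V)
    (hb1 : b1 ∈ bdryAll G P) (hb2 : b2 ∈ bdryAll G P) :
    gdist (BGraph G P) (wt G P w) b1 b2 ≤ gdist G w b1 b2 ∧
    ∀ p : G.Walk b1 b2, ∃ q : (BGraph G P).Walk b1 b2,
      wlen (wt G P w) q ≤ wlen w p := by
  have walk_le : ∀ p : G.Walk b1 b2, ∃ q : (BGraph G P).Walk b1 b2,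
      wlen (wt G P w) q ≤ wlen w p := by
    intro p
    obtain ⟨b, hb, hPb, q, hq⟩ := exists_bGraph_walk_of_walk p hb2
    obtain ⟨q', hq'⟩ := exists_bGraph_walk_le_gdist_add hb1 hb hPb.symm q
    exact ⟨q', hq'.trans hq⟩
  exact ⟨gdist_le_gdist_of_forall_walk w walk_le, walk_le⟩

/-- For any two boundary vertices `b1, b2 ∈ B`, the distance in the boundary
graph is at most the distance in `G`: `dist_BG(b1,b2) ≤ dist_G(b1,b2)`. Concretely, for
every walk `p` in `G` from `b1` to `b2` there exists a walk in `BG` from `b1` to `b2`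
whose length (with weights `wt`) is at most the length of `p`. -/
theorem stmt2 {V : Type*} {ι : Type*} [Fintype V] [Fintype ι]
    (G : SimpleGraph V) (w : V → V → ℝ≥0∞)
    (hsymm : ∀ u v, w u v = w v u) (hfin : ∀ u v, G.Adj u v → w u v < ⊤)
    (P : V → ι) (b1 b2 : V)
    (hb1 : b1 ∈ bdryAll G P) (hb2 : b2 ∈ bdryAll G P) :
    gdist (BGraph G P) (wt G P w) b1 b2 ≤ gdist G w b1 b2 ∧
    ∀ p : G.Walk b1 b2, ∃ q : (BGraph G P).Walk b1 b2,
      wlen (wt G P w) q ≤ wlen w p :=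
  stmt2_general G w P b1 b2 hb1 hb2

end SPQ
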